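/- arXiv:1708.04292 — 2 statements merged into one kernel-verified Lean document; each statement's English description precedes it below -/
import Mathlib

section
/- Fix $d \geq 2$, $0 < p < s < d$, $N \geq 1$, and masses $m^0,\dots,m^N > 0$. The discrete energy $\mathbf{F}(y_0,\dots,y_N) = \sum_{i \neq j} \frac{m^i m^j}{|y_i - y_j|^s} - \sum_{i=1}^N \frac{m^i}{|y_i|^p}$ attains its infimum over the admissible class $\Sigma_N = \{(y_0,\dots,y_N) : y_0 = 0, \ y_i \text{ pairwise distinct}\}$. -/
open MeasureTheory Metric Set Filter Finset
open scoped ENNReal Topology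

/-- The discrete interaction energy `𝐅_{N,m}(x₀,…,x_N)` with Riesz repulsion exponent `s`
and attraction exponent `p` (the points are indexed by `0,…,N`). -/
noncomputable def discF (d : ℕ) (s p : ℝ) (m : ℕ → ℝ)
    (x : ℕ → EuclideanSpace ℝ (Fin d)) (N : ℕ) : ℝ :=
  (∑ i ∈ Finset.range (N + 1), ∑ j ∈ Finset.range (N + 1),
      if i = j then 0 else m i * m j / ‖x i - x j‖ ^ s)
    - ∑ i ∈ Finset.Icc 1 N, m i / ‖x i‖ ^ p

/-!
Collisions are too expensive: near `0` the repulsion `m₀ mᵢ / r ^ s` dominates the attraction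
`mᵢ / r ^ p`, so the energy is at least any single pair interaction minus a constant, and the
configurations of a sublevel set are uniformly separated.

Escaping is never profitable: by pigeonhole, some annulus `r < ‖x‖ ≤ K r` with `r` large
contains none of the `N` points. Moving every point beyond radius `r` onto a ray, at radii
`(i + 2) r ≤ (N + 2) r < K r`, costs at most `(∑ m)² / r ^ s` of repulsion and gains at least
`mᵢ (((N + 2) r) ^ (-p) - (K r) ^ (-p))` of attraction, which wins for large `r` since `p < s`.

So the infimum is an infimum over bounded, uniformly separated configurations, which form a
compact set on which the energy is continuous.
-/

theorem exists_forall_neg_le_div_rpow_sub_div_rpow {s p a b : ℝ} (hp : 0 < p) (hps : p < s)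
    (ha : 0 < a) (hb : 0 < b) :
    ∃ B : ℝ, ∀ r : ℝ, 0 < r → -B ≤ a / r ^ s - b / r ^ p := by
  set r₀ : ℝ := (a / b) ^ (s - p)⁻¹
  have hr₀ : 0 < r₀ := by positivity
  refine ⟨b / r₀ ^ p, fun r hr => ?_⟩
  rcases le_total r r₀ with h | h
  · have hsp : r ^ (s - p) ≤ a / b := by
      calc r ^ (s - p) ≤ r₀ ^ (s - p) := by gcongr
        _ = a / b := Real.rpow_inv_rpow (by positivity) (by linarith)
    have : b / r ^ p ≤ a / r ^ s := by
      rw [div_le_div_iff₀ (by positivity) (by positivity)]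
      calc b * r ^ s = (r ^ (s - p) * b) * r ^ p := by
            rw [mul_comm _ b, mul_assoc, ← Real.rpow_add hr]; ring_nf
        _ ≤ a * r ^ p := by gcongr; rwa [le_div_iff₀ hb] at hsp
    have : 0 ≤ b / r₀ ^ p := by positivity
    linarith
  · have : b / r ^ p ≤ b / r₀ ^ p := by gcongr
    have : 0 ≤ a / r ^ s := by positivity
    linarith

theorem eventually_div_rpow_le_div_rpow_sub_div_rpow {s p a b μ : ℝ} (hp : 0 < p)
    (hps : p < s) (ha : 0 < a) (hab : a < b) (hμ : 0 < μ) (A : ℝ) :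
    ∀ᶠ r in atTop, A / r ^ s ≤ μ / (a * r) ^ p - μ / (b * r) ^ p := by
  have hc : 0 < μ / a ^ p - μ / b ^ p := by
    have : a ^ p < b ^ p := Real.rpow_lt_rpow ha.le hab hp
    have : μ / b ^ p < μ / a ^ p := by gcongr
    linarith
  filter_upwards [(tendsto_rpow_atTop (sub_pos.2 hps)).eventually_ge_atTop
    (A / (μ / a ^ p - μ / b ^ p)), eventually_gt_atTop 0] with r hr hr0
  rw [Real.mul_rpow ha.le hr0.le, Real.mul_rpow (ha.trans hab).le hr0.le, ← div_div, ← div_div,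
    ← sub_div, show s = (s - p) + p by ring, Real.rpow_add hr0, ← div_div]
  gcongr
  rwa [div_le_iff₀ (by positivity), mul_comm, ← div_le_iff₀ hc]

theorem exists_forall_le_or_lt_of_monotone {ι : Type*} (t : Finset ι) (g : ι → ℝ)
    {a : ℕ → ℝ} (ha : Monotone a) :
    ∃ k ≤ #t, ∀ i ∈ t, g i ≤ a k ∨ a (k + 1) < g i := by
  by_contra! h
  have h' : ∀ k ∈ range (#t + 1), ∃ i ∈ t, a k < g i ∧ g i ≤ a (k + 1) :=
    fun k hk => h k (Nat.lt_succ_iff.1 (mem_range.1 hk))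
  obtain ⟨i₀, -⟩ := h 0 (Nat.zero_le _)
  have : Nonempty ι := ⟨i₀⟩
  choose! f hft hlt hle using h'
  obtain ⟨k, hk, k', hk', hne, heq⟩ :=
    Finset.exists_ne_map_eq_of_card_lt_of_maps_to (by simp) hft
  wlog hkk : k < k' generalizing k k'
  · exact this k' hk' k hk hne.symm heq.symm (by omega)
  have h₁ := hle k hk
  have h₂ := hlt k' hk'
  rw [heq] at h₁
  linarith [ha (Nat.succ_le_of_lt hkk)]

theorem IsCompact.exists_isMinOn_of_forall_exists_le {X α : Type*} [TopologicalSpace X]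
    [LinearOrder α] [TopologicalSpace α] [ClosedIicTopology α] {f : X → α} {A K : Set X}
    (hK : IsCompact K) (hKA : K ⊆ A) (hne : K.Nonempty) (hf : ContinuousOn f K)
    (h : ∀ y ∈ A, ∃ z ∈ K, f z ≤ f y) : ∃ x ∈ A, IsMinOn f A x := by
  obtain ⟨x, hxK, hx⟩ := hK.exists_isMinOn hne hf
  refine ⟨x, hKA hxK, fun y hy => ?_⟩
  obtain ⟨z, hzK, hz⟩ := h y hy
  exact (hx hzK).trans hz

/-- The admissible class `Σ_N` of the paper. -/
def Admissible {E : Type*} [Zero E] (N : ℕ) (x : ℕ → E) : Prop :=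
  x 0 = 0 ∧ ∀ i ≤ N, ∀ j ≤ N, i ≠ j → x i ≠ x j

section Energy

variable {E : Type*} [NormedAddCommGroup E] {s p : ℝ} {m : ℕ → ℝ} {N : ℕ}

noncomputable def repulsion (s : ℝ) (m : ℕ → ℝ) (x : ℕ → E) (N : ℕ) : ℝ :=
  ∑ i ∈ range (N + 1), ∑ j ∈ range (N + 1), if i = j then 0 else m i * m j / ‖x i - x j‖ ^ s

noncomputable def attraction (p : ℝ) (m : ℕ → ℝ) (x : ℕ → E) (N : ℕ) : ℝ :=
  ∑ i ∈ Finset.Icc 1 N, m i / ‖x i‖ ^ p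

noncomputable def energy (s p : ℝ) (m : ℕ → ℝ) (x : ℕ → E) (N : ℕ) : ℝ :=
  repulsion s m x N - attraction p m x N

theorem discF_eq_energy (d : ℕ) (s p : ℝ) (m : ℕ → ℝ) (x : ℕ → EuclideanSpace ℝ (Fin d))
    (N : ℕ) : discF d s p m x N = energy s p m x N :=
  rfl

theorem energy_congr {x y : ℕ → E} (h : ∀ i ≤ N, x i = y i) :
    energy s p m x N = energy s p m y N := by
  unfold energy repulsion attraction
  congr 1
  · refine sum_congr rfl fun i hi => sum_congr rfl fun j hj => ?_
    rw [h i (by simpa [Nat.lt_succ_iff] using hi), h j (by simpa [Nat.lt_succ_iff] using hj)]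
  · exact sum_congr rfl fun i hi => by rw [h i (Finset.mem_Icc.1 hi).2]

theorem energy_indicator_Iic (x : ℕ → E) :
    energy s p m ((Set.Iic N).indicator x) N = energy s p m x N :=
  energy_congr fun _ hi => indicator_of_mem (Set.mem_Iic.2 hi) x

theorem Admissible.indicator_Iic {x : ℕ → E} (hx : Admissible N x) :
    Admissible N ((Set.Iic N).indicator x) := by
  refine ⟨by simp [hx.1], fun i hi j hj hij => ?_⟩
  rw [indicator_of_mem (Set.mem_Iic.2 hi), indicator_of_mem (Set.mem_Iic.2 hj)]
  exact hx.2 i hi j hj hij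

theorem Admissible.norm_pos {x : ℕ → E} (hx : Admissible N x) {i : ℕ}
    (hi : i ∈ Finset.Icc 1 N) : 0 < ‖x i‖ := by
  rw [Finset.mem_Icc] at hi
  simpa [hx.1] using hx.2 i hi.2 0 (Nat.zero_le _) (by omega)

theorem ContinuousOn.const_div_norm_rpow {X : Type*} [TopologicalSpace X] {f : X → E}
    {S : Set X} (hf : ContinuousOn f S) (h : ∀ x ∈ S, f x ≠ 0) (c s : ℝ) :
    ContinuousOn (fun x => c / ‖f x‖ ^ s) S :=
  continuousOn_const.div (hf.norm.rpow_const fun x hx => .inl (norm_ne_zero_iff.2 (h x hx)))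
    fun x hx => (Real.rpow_pos_of_pos (norm_pos_iff.2 (h x hx)) s).ne'

theorem continuousOn_energy : ContinuousOn (energy s p m · N) {x : ℕ → E | Admissible N x} := by
  refine .sub (continuousOn_finsetSum _ fun i hi => continuousOn_finsetSum _ fun j hj => ?_)
    (continuousOn_finsetSum _ fun k hk => ?_)
  · split_ifs with hij
    · exact continuousOn_const
    · refine ContinuousOn.const_div_norm_rpow (by fun_prop) (fun x hx => ?_) _ s
      exact sub_ne_zero.2 (hx.2 i (by simpa [Nat.lt_succ_iff] using hi) j
        (by simpa [Nat.lt_succ_iff] using hj) hij)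
  · exact ContinuousOn.const_div_norm_rpow (by fun_prop)
      (fun x hx => norm_pos_iff.1 (hx.norm_pos hk)) _ p

theorem div_rpow_add_sum_le_repulsion (hm : ∀ i, 0 ≤ m i) {x : ℕ → E} (hx : x 0 = 0)
    {i j : ℕ} (hi : i ∈ Finset.Icc 1 N) (hj : j ≤ N) (hij : i ≠ j) :
    m i * m j / ‖x i - x j‖ ^ s + ∑ k ∈ Finset.Icc 1 N, m 0 * m k / ‖x k‖ ^ s
      ≤ repulsion s m x N := by
  set f : ℕ → ℕ → ℝ := fun a b => if a = b then 0 else m a * m b / ‖x a - x b‖ ^ s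
  have hf : ∀ a b, 0 ≤ f a b := fun a b => by
    dsimp only [f]; split_ifs
    exacts [le_rfl, div_nonneg (mul_nonneg (hm a) (hm b)) (Real.rpow_nonneg (norm_nonneg _) _)]
  have hIcc : Finset.Icc 1 N = (range (N + 1)).erase 0 := by ext; simp; omega
  have row_zero :
      ∑ k ∈ Finset.Icc 1 N, m 0 * m k / ‖x k‖ ^ s = ∑ b ∈ range (N + 1), f 0 b := by
    rw [hIcc, ← sum_erase (range (N + 1)) (f := f 0) (a := 0) (by simp [f])]
    refine sum_congr rfl fun k hk => ?_
    simp [f, (ne_of_mem_erase hk).symm, hx]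
  have row_i : f i j ≤ ∑ b ∈ range (N + 1), f i b :=
    single_le_sum (fun b _ => hf i b) (by simpa [Nat.lt_succ_iff] using hj)
  have rows : ∑ b ∈ range (N + 1), f i b
      ≤ ∑ a ∈ (range (N + 1)).erase 0, ∑ b ∈ range (N + 1), f a b :=
    single_le_sum (f := fun a => ∑ b ∈ range (N + 1), f a b)
      (fun a _ => sum_nonneg fun b _ => hf a b) (hIcc ▸ hi)
  have : f i j = m i * m j / ‖x i - x j‖ ^ s := if_neg hij
  rw [repulsion, ← add_sum_erase _ _ (by simp : 0 ∈ range (N + 1)), row_zero]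
  linarith

theorem exists_forall_div_rpow_sub_le_energy (hp : 0 < p) (hps : p < s) (hm : ∀ i, 0 < m i) :
    ∃ C : ℝ, ∀ x : ℕ → E, Admissible N x → ∀ i ≤ N, ∀ j ≤ N, i ≠ j →
      m i * m j / ‖x i - x j‖ ^ s - C ≤ energy s p m x N := by
  choose B hB using fun k =>
    exists_forall_neg_le_div_rpow_sub_div_rpow hp hps (mul_pos (hm 0) (hm k)) (hm k)
  refine ⟨∑ k ∈ Finset.Icc 1 N, B k, fun x hx i hi j hj hij => ?_⟩
  wlog hi0 : i ≠ 0 generalizing i j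
  · rw [mul_comm, norm_sub_rev]
    exact this j hj i hi hij.symm (by omega)
  have hB_sum : -∑ k ∈ Finset.Icc 1 N, B k ≤
      ∑ k ∈ Finset.Icc 1 N, (m 0 * m k / ‖x k‖ ^ s - m k / ‖x k‖ ^ p) := by
    rw [← sum_neg_distrib]
    exact sum_le_sum fun k hk => hB k _ (hx.norm_pos hk)
  have := div_rpow_add_sum_le_repulsion (s := s) (fun i => (hm i).le) hx.1
    (Finset.mem_Icc.2 ⟨Nat.one_le_iff_ne_zero.2 hi0, hi⟩) hj hij
  rw [sum_sub_distrib] at hB_sum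
  unfold energy attraction
  linarith

theorem exists_pos_le_norm_sub_of_energy_le (hp : 0 < p) (hps : p < s) (hm : ∀ i, 0 < m i)
    (E₀ : ℝ) : ∃ δ > 0, ∀ x : ℕ → E, Admissible N x → energy s p m x N ≤ E₀ →
      ∀ i ≤ N, ∀ j ≤ N, i ≠ j → δ ≤ ‖x i - x j‖ := by
  obtain ⟨C, hC⟩ := exists_forall_div_rpow_sub_le_energy (E := E) (N := N) hp hps hm
  obtain ⟨i₁, -, hi₁⟩ := (range (N + 1)).exists_min_image m ⟨0, by simp⟩
  have hs : 0 < s := hp.trans hps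
  have hμ : 0 < m i₁ ^ 2 / (|E₀ + C| + 1) := by have := hm i₁; positivity
  refine ⟨(m i₁ ^ 2 / (|E₀ + C| + 1)) ^ s⁻¹, by positivity, fun x hx hxE i hi j hj hij => ?_⟩
  by_contra! hδ
  have hpos : 0 < ‖x i - x j‖ := norm_pos_iff.2 (sub_ne_zero.2 (hx.2 i hi j hj hij))
  have hmij : m i₁ ^ 2 ≤ m i * m j := by
    rw [sq]
    exact mul_le_mul (hi₁ i (by simpa [Nat.lt_succ_iff] using hi))
      (hi₁ j (by simpa [Nat.lt_succ_iff] using hj)) (hm i₁).le (hm i).le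
  have := hC x hx i hi j hj hij
  have : |E₀ + C| + 1 < m i * m j / ‖x i - x j‖ ^ s :=
    calc |E₀ + C| + 1 = m i₁ ^ 2 / ((m i₁ ^ 2 / (|E₀ + C| + 1)) ^ s⁻¹) ^ s := by
          have := (hm i₁).ne'
          rw [Real.rpow_inv_rpow hμ.le hs.ne']
          field_simp
      _ < m i₁ ^ 2 / ‖x i - x j‖ ^ s := by
          have := hm i₁
          gcongr
      _ ≤ m i * m j / ‖x i - x j‖ ^ s := by gcongr
  linarith [le_abs_self (E₀ + C)]

theorem isClosed_setOf_separated (N : ℕ) (δ : ℝ) :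
    IsClosed {y : ℕ → E | y 0 = 0 ∧ ∀ i ≤ N, ∀ j ≤ N, i ≠ j → δ ≤ ‖y i - y j‖} := by
  simp only [ofPred_and, ofPred_forall]
  exact (isClosed_eq (continuous_apply 0) continuous_const).inter <|
    isClosed_iInter fun i => isClosed_iInter fun _ => isClosed_iInter fun j =>
      isClosed_iInter fun _ => isClosed_iInter fun _ => isClosed_le continuous_const (by fun_prop)

end Energy

section Relocate

variable {E : Type*} [NormedAddCommGroup E] [NormedSpace ℝ E] {s p r : ℝ} {m : ℕ → ℝ} {N : ℕ}
  {v : E} {x : ℕ → E}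

/-- Spacing `r` along the ray, starting at radius `2 r`, keeps the moved points `r` apart from
each other and from the ball of radius `r`. -/
noncomputable def relocate (v : E) (r : ℝ) (x : ℕ → E) (i : ℕ) : E :=
  if r < ‖x i‖ then ((i + 2 : ℝ) * r) • v else x i

theorem relocate_of_le {i : ℕ} (h : ‖x i‖ ≤ r) : relocate v r x i = x i :=
  if_neg h.not_gt

theorem norm_relocate_of_lt (hv : ‖v‖ = 1) (hr : 0 ≤ r) {i : ℕ} (h : r < ‖x i‖) :
    ‖relocate v r x i‖ = (i + 2) * r := by
  rw [relocate, if_pos h, norm_smul, hv, mul_one, Real.norm_of_nonneg (by positivity)]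

theorem norm_relocate_le (hv : ‖v‖ = 1) (hr : 0 ≤ r) (i : ℕ) :
    ‖relocate v r x i‖ ≤ (i + 2) * r := by
  rcases le_or_gt ‖x i‖ r with h | h
  · rw [relocate_of_le h]
    nlinarith [(Nat.cast_nonneg i : (0 : ℝ) ≤ i)]
  · rw [norm_relocate_of_lt hv hr h]

theorem le_norm_relocate_sub (hv : ‖v‖ = 1) (hr : 0 ≤ r) {i j : ℕ} (hij : i ≠ j)
    (h : r < ‖x i‖ ∨ r < ‖x j‖) : r ≤ ‖relocate v r x i - relocate v r x j‖ := by
  wlog hi : r < ‖x i‖ generalizing i j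
  · rw [norm_sub_rev]
    exact this hij.symm h.symm (h.resolve_left hi)
  rcases le_or_gt ‖x j‖ r with hj | hj
  · calc r ≤ (i + 2) * r - r := by nlinarith [(Nat.cast_nonneg i : (0 : ℝ) ≤ i)]
      _ ≤ ‖relocate v r x i‖ - ‖relocate v r x j‖ := by
          rw [norm_relocate_of_lt hv hr hi, relocate_of_le hj]
          linarith
      _ ≤ _ := norm_sub_norm_le _ _
  · have hij' : (1 : ℝ) ≤ |(i : ℝ) - j| := by
      exact_mod_cast Int.one_le_abs (sub_ne_zero.2 (Int.natCast_inj.not.2 hij))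
    rw [relocate, relocate, if_pos hi, if_pos hj, ← sub_smul, norm_smul, hv, mul_one,
      ← sub_mul, Real.norm_eq_abs, abs_mul, abs_of_nonneg hr, add_sub_add_right_eq_sub]
    nlinarith

theorem Admissible.relocate (hv : ‖v‖ = 1) (hr : 0 < r) (hx : Admissible N x) :
    Admissible N (relocate v r x) := by
  refine ⟨by rw [relocate_of_le (by simp [hx.1, hr.le]), hx.1], fun i hi j hj hij => ?_⟩
  by_cases h : r < ‖x i‖ ∨ r < ‖x j‖
  · rw [← sub_ne_zero, ← norm_pos_iff]
    exact hr.trans_le (le_norm_relocate_sub hv hr.le hij h)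
  · push Not at h
    rw [relocate_of_le h.1, relocate_of_le h.2]
    exact hx.2 i hi j hj hij

theorem repulsion_relocate_le (hv : ‖v‖ = 1) (hr : 0 < r) (hs : 0 ≤ s) (hm : ∀ i, 0 ≤ m i) :
    repulsion s m (relocate v r x) N
      ≤ repulsion s m x N + (∑ i ∈ range (N + 1), m i) ^ 2 / r ^ s := by
  have key : ∀ i j,
      (if i = j then 0 else m i * m j / ‖relocate v r x i - relocate v r x j‖ ^ s)
      ≤ (if i = j then 0 else m i * m j / ‖x i - x j‖ ^ s) + m i * m j / r ^ s := by
    intro i j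
    have hmij := mul_nonneg (hm i) (hm j)
    split_ifs with hij
    · positivity
    by_cases h : r < ‖x i‖ ∨ r < ‖x j‖
    · have : m i * m j / ‖relocate v r x i - relocate v r x j‖ ^ s ≤ m i * m j / r ^ s := by
        gcongr
        exact le_norm_relocate_sub hv hr.le hij h
      have : 0 ≤ m i * m j / ‖x i - x j‖ ^ s := by positivity
      linarith
    · push Not at h
      rw [relocate_of_le h.1, relocate_of_le h.2, le_add_iff_nonneg_right]
      positivity
  calc repulsion s m (relocate v r x) N
      ≤ ∑ i ∈ range (N + 1), ∑ j ∈ range (N + 1),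
          ((if i = j then 0 else m i * m j / ‖x i - x j‖ ^ s) + m i * m j / r ^ s) :=
        sum_le_sum fun i _ => sum_le_sum fun j _ => key i j
    _ = _ := by simp only [sum_add_distrib, ← sum_div, ← sum_mul_sum, sq]; rfl

theorem attraction_add_le_attraction_relocate (hv : ‖v‖ = 1) (hr : 0 < r) (hp : 0 ≤ p)
    (hm : ∀ i, 0 ≤ m i) {K : ℝ} (hK : N + 2 ≤ K)
    (hgap : ∀ k ∈ Finset.Icc 1 N, ‖x k‖ ≤ r ∨ K * r < ‖x k‖) {i₀ : ℕ}
    (hi₀ : i₀ ∈ Finset.Icc 1 N) (hri₀ : r < ‖x i₀‖) :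
    attraction p m x N + (m i₀ / ((N + 2) * r) ^ p - m i₀ / (K * r) ^ p)
      ≤ attraction p m (relocate v r x) N := by
  have hK0 : 0 < K := by linarith [(Nat.cast_nonneg N : (0 : ℝ) ≤ N)]
  have moved : ∀ k ∈ Finset.Icc 1 N, r < ‖x k‖ →
      m k / ‖x k‖ ^ p + (m k / ((N + 2) * r) ^ p - m k / (K * r) ^ p)
        ≤ m k / ‖relocate v r x k‖ ^ p := by
    intro k hk hrk
    have hKr : K * r < ‖x k‖ := (hgap k hk).resolve_left hrk.not_ge
    have hkN : (k : ℝ) ≤ N := by exact_mod_cast (Finset.mem_Icc.1 hk).2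
    have : m k / ‖x k‖ ^ p ≤ m k / (K * r) ^ p := by
      have := hm k
      gcongr
    have : m k / ((N + 2) * r) ^ p ≤ m k / ‖relocate v r x k‖ ^ p := by
      have := hm k
      rw [norm_relocate_of_lt hv hr.le hrk]
      gcongr
    linarith
  have le : ∀ k ∈ Finset.Icc 1 N, m k / ‖x k‖ ^ p ≤ m k / ‖relocate v r x k‖ ^ p := by
    intro k hk
    rcases le_or_gt ‖x k‖ r with h | h
    · rw [relocate_of_le h]
    · have : m k / (K * r) ^ p ≤ m k / ((N + 2) * r) ^ p := by
        have := hm k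
        gcongr
      linarith [moved k hk h]
  have := single_le_sum (f := fun k => m k / ‖relocate v r x k‖ ^ p - m k / ‖x k‖ ^ p)
    (fun k hk => sub_nonneg.2 (le k hk)) hi₀
  rw [sum_sub_distrib] at this
  unfold attraction
  linarith [moved i₀ hi₀ hri₀]

theorem energy_relocate_le (hv : ‖v‖ = 1) (hr : 0 < r) (hp : 0 ≤ p) (hs : 0 ≤ s)
    (hm : ∀ i, 0 ≤ m i) {K : ℝ} (hK : N + 2 ≤ K)
    (hgap : ∀ k ∈ Finset.Icc 1 N, ‖x k‖ ≤ r ∨ K * r < ‖x k‖) {i₀ : ℕ}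
    (hi₀ : i₀ ∈ Finset.Icc 1 N) (hri₀ : r < ‖x i₀‖)
    (hr_large : (∑ i ∈ range (N + 1), m i) ^ 2 / r ^ s
      ≤ m i₀ / ((N + 2) * r) ^ p - m i₀ / (K * r) ^ p) :
    energy s p m (relocate v r x) N ≤ energy s p m x N := by
  have := repulsion_relocate_le hv hr hs hm (x := x) (N := N)
  have := attraction_add_le_attraction_relocate hv hr hp hm hK hgap hi₀ hri₀
  unfold energy
  linarith

theorem exists_bounded_energy_le [Nontrivial E] (hp : 0 < p) (hps : p < s)
    (hm : ∀ i, 0 < m i) :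
    ∃ ρ : ℝ, ∀ x : ℕ → E, Admissible N x → ∃ y : ℕ → E,
      Admissible N y ∧ (∀ i ≤ N, ‖y i‖ ≤ ρ) ∧ energy s p m y N ≤ energy s p m x N := by
  obtain ⟨v, hv⟩ := exists_norm_eq E zero_le_one
  have hN : (0 : ℝ) ≤ N := Nat.cast_nonneg N
  set K : ℝ := N + 3
  have hK : (N : ℝ) + 2 ≤ K := by linarith
  obtain ⟨R, hR⟩ := eventually_atTop.1 <| (eventually_gt_atTop 0).and <|
    (range (N + 1)).eventually_all.2 fun i _ => eventually_div_rpow_le_div_rpow_sub_div_rpow hp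
      hps (by positivity : (0 : ℝ) < N + 2) (by linarith : (N : ℝ) + 2 < K) (hm i)
      ((∑ i ∈ range (N + 1), m i) ^ 2)
  have hR0 : 0 < R := (hR R le_rfl).1
  have hK1 : 1 ≤ K := by linarith
  refine ⟨(N + 2) * (R * K ^ N), fun x hx => ?_⟩
  obtain ⟨k, hk, hgap⟩ := exists_forall_le_or_lt_of_monotone (Finset.Icc 1 N) (‖x ·‖)
    (a := fun k => R * K ^ k) fun k l hkl =>
      mul_le_mul_of_nonneg_left (pow_le_pow_right₀ hK1 hkl) hR0.le
  rw [Nat.card_Icc, Nat.add_sub_cancel] at hk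
  set r := R * K ^ k
  have hRr : R ≤ r := le_mul_of_one_le_right hR0.le (one_le_pow₀ hK1)
  have hr : 0 < r := hR0.trans_le hRr
  have hbound : ∀ i ≤ N, ((i : ℝ) + 2) * r ≤ (N + 2) * (R * K ^ N) := fun i hi => by
    have : (i : ℝ) ≤ N := by exact_mod_cast hi
    gcongr
    exact mul_le_mul_of_nonneg_left (pow_le_pow_right₀ hK1 hk) hR0.le
  by_cases hmove : ∃ i₀ ∈ Finset.Icc 1 N, r < ‖x i₀‖
  · obtain ⟨i₀, hi₀, hri₀⟩ := hmove
    refine ⟨relocate v r x, hx.relocate hv hr,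
      fun i hi => (norm_relocate_le hv hr.le i).trans (hbound i hi),
      energy_relocate_le hv hr hp.le (hp.trans hps).le (fun i => (hm i).le) hK (fun i hi => ?_)
        hi₀ hri₀ ((hR r hRr).2 i₀ (by simpa [Nat.lt_succ_iff] using (Finset.mem_Icc.1 hi₀).2))⟩
    rw [mul_comm K, mul_assoc, ← pow_succ]
    exact hgap i hi
  · push Not at hmove
    refine ⟨x, hx, fun i hi => ?_, le_rfl⟩
    rcases Nat.eq_zero_or_pos i with rfl | hi0
    · simpa [hx.1] using (hbound 0 (Nat.zero_le N)).trans' (by positivity)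
    · calc ‖x i‖ ≤ r := hmove i (Finset.mem_Icc.2 ⟨hi0, hi⟩)
        _ ≤ ((i : ℝ) + 2) * r := by nlinarith [(Nat.cast_nonneg i : (0 : ℝ) ≤ i)]
        _ ≤ _ := hbound i hi

end Relocate

section Minimizer

variable {E : Type*} [NormedAddCommGroup E] [NormedSpace ℝ E] {s p : ℝ} {m : ℕ → ℝ} {N : ℕ}

theorem admissible_natCast_smul {v : E} (hv : v ≠ 0) : Admissible N (fun i => (i : ℝ) • v) :=
  ⟨by simp, fun _ _ _ _ hij h => hij (Nat.cast_injective (smul_left_injective ℝ hv h))⟩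

theorem exists_isMinOn_energy [ProperSpace E] [Nontrivial E] (hp : 0 < p) (hps : p < s)
    (hm : ∀ i, 0 < m i) :
    ∃ y : ℕ → E, Admissible N y ∧ IsMinOn (energy s p m · N) {x | Admissible N x} y := by
  obtain ⟨ρ, hρ⟩ := exists_bounded_energy_le (E := E) (N := N) hp hps hm
  obtain ⟨v, hv⟩ := exists_ne (0 : E)
  obtain ⟨y₀, hy₀, hy₀ρ, -⟩ := hρ _ (admissible_natCast_smul hv)
  obtain ⟨δ, hδ, hsep⟩ :=
    exists_pos_le_norm_sub_of_energy_le (E := E) (N := N) hp hps hm (energy s p m y₀ N)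
  -- Cutting configurations off beyond `N` puts them in a compact subset of `ℕ → E`.
  set K := (univ.pi fun i => closedBall (0 : E) (if i ≤ N then ρ else 0)) ∩
    {y | y 0 = 0 ∧ ∀ i ≤ N, ∀ j ≤ N, i ≠ j → δ ≤ ‖y i - y j‖}
  have hK : IsCompact K := (isCompact_univ_pi fun i => isCompact_closedBall _ _).inter_right
    (isClosed_setOf_separated N δ)
  have hKA : K ⊆ {x | Admissible N x} := fun y hy => ⟨hy.2.1, fun i hi j hj hij h => by
    have := hy.2.2 i hi j hj hij
    rw [h, sub_self, norm_zero] at this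
    exact hδ.not_ge this⟩
  have mem_K : ∀ y, Admissible N y → (∀ i ≤ N, ‖y i‖ ≤ ρ) →
      energy s p m y N ≤ energy s p m y₀ N → (Set.Iic N).indicator y ∈ K := by
    intro y hy hyρ hyE
    refine ⟨fun i _ => ?_, hy.indicator_Iic.1, fun i hi j hj hij => ?_⟩
    · by_cases hi : i ≤ N <;> simp [hi, hyρ]
    · rw [indicator_of_mem (Set.mem_Iic.2 hi), indicator_of_mem (Set.mem_Iic.2 hj)]
      exact hsep y hy hyE i hi j hj hij
  refine hK.exists_isMinOn_of_forall_exists_le hKA ⟨_, mem_K y₀ hy₀ hy₀ρ le_rfl⟩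
    (continuousOn_energy.mono hKA) fun x hx => ?_
  obtain ⟨y, hy, hyρ, hyE⟩ := hρ x hx
  rcases le_or_gt (energy s p m y N) (energy s p m y₀ N) with h | h
  · exact ⟨_, mem_K y hy hyρ h, by rwa [energy_indicator_Iic]⟩
  · exact ⟨_, mem_K y₀ hy₀ hy₀ρ le_rfl, by rw [energy_indicator_Iic]; linarith⟩

end Minimizer

theorem stmt9_general (d N : ℕ) (s p : ℝ) (hd : 2 ≤ d) (hp0 : 0 < p) (hps : p < s)
    (m : ℕ → ℝ) (hm : ∀ i, 0 < m i) :
    ∃ y : ℕ → EuclideanSpace ℝ (Fin d), y 0 = 0 ∧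
      (∀ i ≤ N, ∀ j ≤ N, i ≠ j → y i ≠ y j) ∧
      ∀ y' : ℕ → EuclideanSpace ℝ (Fin d), y' 0 = 0 →
        (∀ i ≤ N, ∀ j ≤ N, i ≠ j → y' i ≠ y' j) →
        discF d s p m y N ≤ discF d s p m y' N := by
  have : NeZero d := ⟨by omega⟩
  obtain ⟨y, ⟨hy0, hy⟩, hmin⟩ :=
    exists_isMinOn_energy (E := EuclideanSpace ℝ (Fin d)) (N := N) hp0 hps hm
  refine ⟨y, hy0, hy, fun y' hy'0 hy' => ?_⟩
  rw [discF_eq_energy, discF_eq_energy]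
  exact hmin ⟨hy'0, hy'⟩

/-- The discrete interaction energy attains its infimum over the admissible class
`Σ_N = {(y₀,…,y_N) : y₀ = 0, yᵢ pairwise distinct}`. -/
theorem stmt9 (d N : ℕ) (s p : ℝ) (hd : 2 ≤ d) (hp0 : 0 < p) (hps : p < s) (hsd : s < d)
    (hN : 1 ≤ N) (m : ℕ → ℝ) (hm : ∀ i, 0 < m i) :
    ∃ y : ℕ → EuclideanSpace ℝ (Fin d), y 0 = 0 ∧
      (∀ i ≤ N, ∀ j ≤ N, i ≠ j → y i ≠ y j) ∧
      ∀ y' : ℕ → EuclideanSpace ℝ (Fin d), y' 0 = 0 →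
        (∀ i ≤ N, ∀ j ≤ N, i ≠ j → y' i ≠ y' j) →
        discF d s p m y N ≤ discF d s p m y' N :=
  stmt9_general d N s p hd hp0 hps m hm
end

section
/- Let $f : (0,\infty) \to \mathbb{R}$ be strictly concave on an interval $(0, \bar m)$ with $f(m) \to 0$ as $m \to 0^+$, and suppose $(m^1, \dots, m^k)$ with $m^i > 0$ and $\sum m^i = M$ minimizes $\sum_{i=1}^k f(m^i)$ among all such decompositions of $M$ into $k$ positive parts. Then at most one of the $m^i$ lies in the open interval $(0, \bar m)$. -/
/-!
Two masses strictly inside `(0, m̄)` can be pushed apart, keeping their sum fixed and both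
masses inside `(0, m̄)`. Each old mass lies strictly between the two new ones, so strict
concavity makes the sum of the values of `f` drop, contradicting minimality.
-/

open Set Filter
open scoped Topology

theorem Fintype.sum_comp_update_update {ι α β : Type*} [Fintype ι] [DecidableEq ι]
    [AddCommGroup β] (g : α → β) (m : ι → α) {p q : ι} (hpq : p ≠ q) (x y : α) :
    ∑ l, g (Function.update (Function.update m p x) q y l)
      = ∑ l, g (m l) + (g x - g (m p)) + (g y - g (m q)) := by
  have hdiff : ∑ l, (g (Function.update (Function.update m p x) q y l) - g (m l))
      = (g x - g (m p)) + (g y - g (m q)) := by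
    rw [Fintype.sum_eq_add p q hpq fun l hl => by simp [hl.1, hl.2]]
    simp [hpq]
  rw [Finset.sum_sub_distrib] at hdiff
  rw [add_assoc, ← hdiff]
  abel

section StrictConcave

variable {𝕜 : Type*} [Field 𝕜] [LinearOrder 𝕜] [IsStrictOrderedRing 𝕜] {s : Set 𝕜} {f : 𝕜 → 𝕜}
  {x y z a b : 𝕜}

theorem StrictConcaveOn.secant_lt_of_mem_Ioo (hf : StrictConcaveOn 𝕜 s f) (hx : x ∈ s)
    (hy : y ∈ s) (hz : z ∈ Ioo x y) :
    ((y - z) * f x + (z - x) * f y) / (y - x) < f z := by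
  have hxy : 0 < y - x := sub_pos.2 (hz.1.trans hz.2)
  have hcomb : ((y - z) / (y - x)) • x + ((z - x) / (y - x)) • y = z := by
    simp only [smul_eq_mul]; field_simp; ring
  have key := hf.2 hx hy (sub_pos.1 hxy).ne (div_pos (sub_pos.2 hz.2) hxy)
    (div_pos (sub_pos.2 hz.1) hxy) (by field_simp; ring)
  rw [hcomb] at key
  simp only [smul_eq_mul] at key
  calc ((y - z) * f x + (z - x) * f y) / (y - x)
      = (y - z) / (y - x) * f x + (z - x) / (y - x) * f y := by ring
    _ < f z := key

theorem StrictConcaveOn.add_lt_add_of_mem_Ioo (hf : StrictConcaveOn 𝕜 s f) (hx : x ∈ s)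
    (hy : y ∈ s) (ha : a ∈ Ioo x y) (hb : b ∈ Ioo x y) (hab : a + b = x + y) :
    f x + f y < f a + f b := by
  have hxy : x < y := ha.1.trans ha.2
  calc f x + f y
      = ((y - a) * f x + (a - x) * f y) / (y - x) + ((y - b) * f x + (b - x) * f y) / (y - x) := by
        field_simp; linear_combination (f x - f y) * hab
    _ < f a + f b := add_lt_add (hf.secant_lt_of_mem_Ioo hx hy ha) (hf.secant_lt_of_mem_Ioo hx hy hb)

theorem StrictConcaveOn.exists_add_eq_add_lt_of_mem_Ioo {l u : 𝕜}
    (hf : StrictConcaveOn 𝕜 (Ioo l u) f) (ha : a ∈ Ioo l u) (hb : b ∈ Ioo l u) :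
    ∃ x ∈ Ioo l u, ∃ y ∈ Ioo l u, x + y = a + b ∧ f x + f y < f a + f b := by
  wlog hab : a ≤ b generalizing a b
  · obtain ⟨x, hx, y, hy, hsum, hlt⟩ := this hb ha (le_of_not_ge hab)
    exact ⟨x, hx, y, hy, by linarith, by linarith⟩
  obtain ⟨δ, hδ, hδab⟩ := exists_between (lt_min (sub_pos.2 ha.1) (sub_pos.2 hb.2))
  obtain ⟨hδa, hδb⟩ := lt_min_iff.1 hδab
  have hx : a - δ ∈ Ioo l u := ⟨by linarith, by linarith [ha.2]⟩
  have hy : b + δ ∈ Ioo l u := ⟨by linarith [hb.1], by linarith⟩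
  refine ⟨a - δ, hx, b + δ, hy, by ring, hf.add_lt_add_of_mem_Ioo hx hy ?_ ?_ (by ring)⟩
  · exact ⟨by linarith, by linarith⟩
  · exact ⟨by linarith, by linarith⟩

theorem StrictConcaveOn.eq_of_mem_Ioo_of_forall_sum_le {ι : Type*} [Fintype ι] {u : 𝕜}
    (hf : StrictConcaveOn 𝕜 (Ioo 0 u) f) {m : ι → 𝕜} (hm : ∀ i, 0 < m i)
    (hmin : ∀ m' : ι → 𝕜, (∀ i, 0 < m' i) → ∑ i, m' i = ∑ i, m i →
      ∑ i, f (m i) ≤ ∑ i, f (m' i))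
    {i j : ι} (hi : m i ∈ Ioo 0 u) (hj : m j ∈ Ioo 0 u) : i = j := by
  classical
  by_contra hij
  obtain ⟨x, hx, y, hy, hxy, hlt⟩ := hf.exists_add_eq_add_lt_of_mem_Ioo hi hj
  set m' := Function.update (Function.update m i x) j y
  have hpos : ∀ l, 0 < m' l := by
    intro l
    simp only [m', Function.update_apply]
    split_ifs
    exacts [hy.1, hx.1, hm l]
  have hsum : ∑ l, m' l = ∑ l, m l :=
    (Fintype.sum_comp_update_update id m hij x y).trans (by simp only [id]; linarith)
  have hle := hmin m' hpos hsum
  rw [Fintype.sum_comp_update_update f m hij x y] at hle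
  linarith

end StrictConcave

theorem stmt12_general (f : ℝ → ℝ) (mb M : ℝ)
    (hconc : StrictConcaveOn ℝ (Set.Ioo 0 mb) f)
    (k : ℕ) (m : Fin k → ℝ) (hm : ∀ i, 0 < m i) (hsum : ∑ i, m i = M)
    (hmin : ∀ m' : Fin k → ℝ, (∀ i, 0 < m' i) → ∑ i, m' i = M →
      ∑ i, f (m i) ≤ ∑ i, f (m' i)) :
    ∀ i j, m i ∈ Set.Ioo 0 mb → m j ∈ Set.Ioo 0 mb → i = j := by
  subst hsum
  exact fun i j hi hj => hconc.eq_of_mem_Ioo_of_forall_sum_le hm hmin hi hj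

/-- Abstract concavity argument: if `f` is strictly concave on `(0, m̄)` with `f → 0` at `0⁺`,
and `(m¹, …, mᵏ)` is an optimal decomposition of `M` into `k` positive masses minimizing
`∑ f(mⁱ)`, then at most one of the masses lies in `(0, m̄)`. -/
theorem stmt12 (f : ℝ → ℝ) (mb M : ℝ) (hmb : 0 < mb) (hM : 0 < M)
    (hconc : StrictConcaveOn ℝ (Set.Ioo 0 mb) f)
    (hf0 : Tendsto f (𝓝[>] (0 : ℝ)) (𝓝 0))
    (k : ℕ) (hk : 1 ≤ k) (m : Fin k → ℝ) (hm : ∀ i, 0 < m i) (hsum : ∑ i, m i = M)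
    (hmin : ∀ m' : Fin k → ℝ, (∀ i, 0 < m' i) → ∑ i, m' i = M →
      ∑ i, f (m i) ≤ ∑ i, f (m' i)) :
    ∀ i j, m i ∈ Set.Ioo 0 mb → m j ∈ Set.Ioo 0 mb → i = j :=
  stmt12_general f mb M hconc k m hm hsum hmin
end
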